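/- For every α > 0, ∫₀^∞ Γ(α,s)² ds = α Γ(α)² − Γ(2α+1)/(2^{2α} α), where Γ(α,s) = ∫_s^∞ t^{α−1} e^{−t} dt is the upper incomplete gamma function and Γ is the gamma function. -/

import Mathlib

/-!
The function `Γ(α, ·)²` has the explicit primitive
`F(s) = (s - α) Γ(α, s)² - 2 s^α e^(-s) Γ(α, s) + 2^(1-2α) Γ(2α, 2s)`:
differentiating with `∂ₛ Γ(α, s) = -s^(α-1) e^(-s)`, every term except `Γ(α, s)²` cancels, the
last one against `(2s)^(2α-1) e^(-2s) = 2^(2α-1) (s^(α-1) e^(-s)) (s^α e^(-s))`.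
The bound `Γ(α, s) ≤ C e^(-s/2)` makes `Γ(α, ·)²` integrable and `F` vanish at infinity, so the
integral is `-F(0) = α Γ(α)² - 2^(1-2α) Γ(2α)`, and `Γ(2α + 1) = 2α Γ(2α)`.
-/

open MeasureTheory Set

/-- The upper incomplete gamma function `Γ(a, x) = ∫_x^∞ t^(a−1) e^(−t) dt`. -/
noncomputable def upperIncompleteGamma (a x : ℝ) : ℝ :=
  ∫ t in Ioi x, t ^ (a - 1) * Real.exp (-t)

open Filter Topology Real

section

variable {a x : ℝ}

theorem integrableOn_rpow_mul_exp_neg_Ioi (ha : 0 < a) (hx : 0 ≤ x) :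
    IntegrableOn (fun t : ℝ => t ^ (a - 1) * exp (-t)) (Ioi x) :=
  ((GammaIntegral_convergent ha).mono_set (Ioi_subset_Ioi hx)).congr_fun
    (fun _ _ => mul_comm _ _) measurableSet_Ioi

theorem upperIncompleteGamma_zero (ha : 0 < a) : upperIncompleteGamma a 0 = Gamma a := by
  rw [upperIncompleteGamma, Gamma_eq_integral ha]
  exact setIntegral_congr_fun measurableSet_Ioi fun _ _ => mul_comm _ _

theorem upperIncompleteGamma_nonneg (hx : 0 ≤ x) : 0 ≤ upperIncompleteGamma a x :=
  setIntegral_nonneg measurableSet_Ioi fun t ht => by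
    have : 0 < t := hx.trans_lt ht
    positivity

theorem upperIncompleteGamma_eq_Gamma_sub_integral (ha : 0 < a) (hx : 0 ≤ x) :
    upperIncompleteGamma a x = Gamma a - ∫ t in (0 : ℝ)..x, t ^ (a - 1) * exp (-t) := by
  rw [← upperIncompleteGamma_zero ha, intervalIntegral.integral_of_le hx, eq_sub_iff_add_eq,
    upperIncompleteGamma, upperIncompleteGamma, add_comm,
    ← setIntegral_union (Ioc_disjoint_Ioi le_rfl) measurableSet_Ioi
      ((integrableOn_rpow_mul_exp_neg_Ioi ha le_rfl).mono_set Ioc_subset_Ioi_self)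
      (integrableOn_rpow_mul_exp_neg_Ioi ha hx), Ioc_union_Ioi_eq_Ioi hx]

theorem hasDerivAt_upperIncompleteGamma (ha : 0 < a) (hx : 0 < x) :
    HasDerivAt (upperIncompleteGamma a) (-(x ^ (a - 1) * exp (-x))) x := by
  have hcont : ContinuousOn (fun t : ℝ => t ^ (a - 1) * exp (-t)) (Ioi 0) := fun t ht =>
    ((continuousAt_rpow_const t (a - 1) (Or.inl ht.ne')).mul
      (continuous_exp.comp continuous_neg).continuousAt).continuousWithinAt
  have hint : IntervalIntegrable (fun t : ℝ => t ^ (a - 1) * exp (-t)) volume 0 x :=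
    (intervalIntegrable_iff_integrableOn_Ioc_of_le hx.le).2
      ((integrableOn_rpow_mul_exp_neg_Ioi ha le_rfl).mono_set Ioc_subset_Ioi_self)
  refine ((intervalIntegral.integral_hasDerivAt_right hint
    (hcont.stronglyMeasurableAtFilter isOpen_Ioi x hx)
    (hcont.continuousAt (Ioi_mem_nhds hx))).const_sub (Gamma a)).congr_of_eventuallyEq ?_
  filter_upwards [Ioi_mem_nhds hx] with y hy
  exact upperIncompleteGamma_eq_Gamma_sub_integral ha hy.le

theorem continuousOn_upperIncompleteGamma (ha : 0 < a) :
    ContinuousOn (upperIncompleteGamma a) (Ici 0) := by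
  intro x hx
  have hx1 : (0 : ℝ) ≤ x + 1 := by linarith [mem_Ici.1 hx]
  have hint : IntegrableOn (fun t : ℝ => t ^ (a - 1) * exp (-t)) (uIcc 0 (x + 1)) := by
    rw [uIcc_of_le hx1, integrableOn_Icc_iff_integrableOn_Ioc]
    exact (integrableOn_rpow_mul_exp_neg_Ioi ha le_rfl).mono_set Ioc_subset_Ioi_self
  have hIcc : ContinuousOn (upperIncompleteGamma a) (Icc 0 (x + 1)) := by
    rw [← uIcc_of_le hx1]
    refine (continuousOn_const.sub (intervalIntegral.continuousOn_primitive_interval hint)).congr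
      fun y hy => upperIncompleteGamma_eq_Gamma_sub_integral ha ?_
    exact (uIcc_of_le hx1 ▸ hy).1
  refine (hIcc x ⟨hx, by linarith⟩).mono_of_mem_nhdsWithin ?_
  exact mem_nhdsWithin.2 ⟨Iio (x + 1), isOpen_Iio, lt_add_one x, fun y hy => ⟨hy.2, hy.1.le⟩⟩

theorem tendsto_upperIncompleteGamma_atTop (ha : 0 < a) :
    Tendsto (upperIncompleteGamma a) atTop (𝓝 0) := by
  have h := (tendsto_const_nhds (x := Gamma a)).sub (intervalIntegral_tendsto_integral_Ioi 0
    (integrableOn_rpow_mul_exp_neg_Ioi ha le_rfl) tendsto_id)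
  rw [← upperIncompleteGamma, upperIncompleteGamma_zero ha, sub_self] at h
  refine h.congr' ?_
  filter_upwards [eventually_ge_atTop 0] with x hx
  exact (upperIncompleteGamma_eq_Gamma_sub_integral ha hx).symm

theorem exists_upperIncompleteGamma_le_mul_exp (ha : 0 < a) :
    ∃ C, ∀ x, 0 ≤ x → upperIncompleteGamma a x ≤ C * exp (-x / 2) := by
  have hI : IntegrableOn (fun t : ℝ => t ^ (a - 1) * exp (-t / 2)) (Ioi 0) := by
    refine (integrableOn_rpow_mul_exp_neg_mul_rpow (p := 1) (by linarith : -1 < a - 1) one_pos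
      one_half_pos).congr_fun (fun t _ => ?_) measurableSet_Ioi
    simp only [rpow_one]; ring_nf
  refine ⟨∫ t in Ioi 0, t ^ (a - 1) * exp (-t / 2), fun x hx => ?_⟩
  calc upperIncompleteGamma a x
      ≤ ∫ t in Ioi x, t ^ (a - 1) * exp (-t / 2) * exp (-x / 2) := by
        refine setIntegral_mono_on (integrableOn_rpow_mul_exp_neg_Ioi ha hx)
          ((hI.mono_set (Ioi_subset_Ioi hx)).mul_const _) measurableSet_Ioi fun t ht => ?_
        have ht0 : 0 < t := hx.trans_lt ht
        have hsplit : exp (-t) = exp (-t / 2) * exp (-t / 2) := by rw [← exp_add]; ring_nf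
        rw [hsplit, ← mul_assoc]
        gcongr
        exact (mem_Ioi.1 ht).le
    _ = (∫ t in Ioi x, t ^ (a - 1) * exp (-t / 2)) * exp (-x / 2) := integral_mul_const _ _
    _ ≤ (∫ t in Ioi 0, t ^ (a - 1) * exp (-t / 2)) * exp (-x / 2) := by
        refine mul_le_mul_of_nonneg_right (setIntegral_mono_set hI ?_
          (Ioi_subset_Ioi hx).eventuallyLE) (exp_pos _).le
        filter_upwards [ae_restrict_mem measurableSet_Ioi] with t (ht : 0 < t)
        positivity

theorem integrableOn_upperIncompleteGamma_sq (ha : 0 < a) :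
    IntegrableOn (fun s => upperIncompleteGamma a s ^ 2) (Ioi 0) := by
  obtain ⟨C, hC⟩ := exists_upperIncompleteGamma_le_mul_exp ha
  have hexp : IntegrableOn (fun s : ℝ => C ^ 2 * exp (-s)) (Ioi 0) :=
    (integrableOn_exp_neg_Ioi 0).const_mul _
  refine hexp.mono' (((continuousOn_upperIncompleteGamma ha).mono Ioi_subset_Ici_self).pow 2
    |>.aestronglyMeasurable measurableSet_Ioi) ?_
  filter_upwards [ae_restrict_mem measurableSet_Ioi] with s (hs : 0 < s)
  rw [norm_pow, norm_of_nonneg (upperIncompleteGamma_nonneg hs.le)]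
  calc upperIncompleteGamma a s ^ 2 ≤ (C * exp (-s / 2)) ^ 2 :=
        pow_le_pow_left₀ (upperIncompleteGamma_nonneg hs.le) (hC s hs.le) 2
    _ = C ^ 2 * exp (-s) := by rw [mul_pow, ← exp_nat_mul]; ring_nf

theorem tendsto_mul_upperIncompleteGamma_sq_atTop (ha : 0 < a) :
    Tendsto (fun s => s * upperIncompleteGamma a s ^ 2) atTop (𝓝 0) := by
  obtain ⟨C, hC⟩ := exists_upperIncompleteGamma_le_mul_exp ha
  have hse : Tendsto (fun s : ℝ => C ^ 2 * (s * exp (-s))) atTop (𝓝 0) := by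
    simpa using (tendsto_rpow_mul_exp_neg_mul_atTop_nhds_zero 1 1 one_pos).const_mul (C ^ 2)
  refine squeeze_zero' ?_ ?_ hse
  · filter_upwards [eventually_ge_atTop 0] with s hs
    have := upperIncompleteGamma_nonneg (a := a) hs
    positivity
  · filter_upwards [eventually_ge_atTop 0] with s hs
    calc s * upperIncompleteGamma a s ^ 2 ≤ s * (C * exp (-s / 2)) ^ 2 := by
          gcongr
          exacts [upperIncompleteGamma_nonneg hs, hC s hs]
      _ = C ^ 2 * (s * exp (-s)) := by rw [mul_pow, ← exp_nat_mul]; ring_nf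

noncomputable def upperIncompleteGammaSqPrimitive (a s : ℝ) : ℝ :=
  (s - a) * upperIncompleteGamma a s ^ 2 - 2 * s ^ a * exp (-s) * upperIncompleteGamma a s
    + 2 ^ (1 - 2 * a) * upperIncompleteGamma (2 * a) (2 * s)

theorem hasDerivAt_upperIncompleteGammaSqPrimitive (ha : 0 < a) {s : ℝ} (hs : 0 < s) :
    HasDerivAt (upperIncompleteGammaSqPrimitive a) (upperIncompleteGamma a s ^ 2) s := by
  have hΓ := hasDerivAt_upperIncompleteGamma ha hs
  have hΓ₂ := (hasDerivAt_upperIncompleteGamma (by linarith : 0 < 2 * a)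
    (by linarith : 0 < 2 * s)).comp s ((hasDerivAt_id s).const_mul 2)
  have hpow : HasDerivAt (fun s => s ^ a) (a * s ^ (a - 1)) s :=
    hasDerivAt_rpow_const (Or.inl hs.ne')
  have hF := ((((hasDerivAt_id s).sub_const a).mul (hΓ.pow 2)).sub
    (((hpow.const_mul 2).mul (hasDerivAt_neg s).exp).mul hΓ)).add (hΓ₂.const_mul (2 ^ (1 - 2 * a)))
  refine (hF.congr_of_eventuallyEq (.of_forall fun y => ?_)).congr_deriv ?_
  · simp only [upperIncompleteGammaSqPrimitive, Pi.add_apply, Pi.sub_apply, Pi.mul_apply,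
      Pi.pow_apply, Function.comp_apply, id]
  have hsa : s ^ a = s * s ^ (a - 1) := by
    rw [mul_comm, ← rpow_add_one hs.ne']; ring_nf
  have h2sa : (2 * s) ^ (2 * a - 1) = 2 ^ (2 * a - 1) * (s ^ a * s ^ (a - 1)) := by
    rw [mul_rpow zero_le_two hs.le, ← rpow_add hs]; ring_nf
  have h2 : (2 : ℝ) ^ (1 - 2 * a) * 2 ^ (2 * a - 1) = 1 := by
    rw [← rpow_add two_pos]; norm_num
  have hexp : exp (-(2 * s)) = exp (-s) ^ 2 := by rw [← exp_nat_mul]; ring_nf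
  simp only [Pi.mul_apply, Pi.pow_apply, id, hsa, h2sa, hexp]
  linear_combination (-2 * s * (s ^ (a - 1)) ^ 2 * exp (-s) ^ 2) * h2

theorem continuousOn_upperIncompleteGammaSqPrimitive (ha : 0 < a) :
    ContinuousOn (upperIncompleteGammaSqPrimitive a) (Ici 0) := by
  have hΓ := continuousOn_upperIncompleteGamma ha
  have hΓ₂ : ContinuousOn (fun s => upperIncompleteGamma (2 * a) (2 * s)) (Ici 0) :=
    (continuousOn_upperIncompleteGamma (by linarith)).comp (continuousOn_const.mul continuousOn_id)
      fun s (hs : 0 ≤ s) => (by positivity : 0 ≤ 2 * s)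
  have hpow : ContinuousOn (fun s : ℝ => s ^ a) (Ici 0) :=
    continuousOn_id.rpow_const fun _ _ => Or.inr ha.le
  unfold upperIncompleteGammaSqPrimitive
  fun_prop

theorem tendsto_upperIncompleteGammaSqPrimitive_atTop (ha : 0 < a) :
    Tendsto (upperIncompleteGammaSqPrimitive a) atTop (𝓝 0) := by
  have hΓ := tendsto_upperIncompleteGamma_atTop ha
  have hΓ₂ := (tendsto_upperIncompleteGamma_atTop (by linarith : 0 < 2 * a)).comp
    (tendsto_id.const_mul_atTop two_pos)
  have hpow : Tendsto (fun s : ℝ => s ^ a * exp (-s)) atTop (𝓝 0) := by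
    simpa using tendsto_rpow_mul_exp_neg_mul_atTop_nhds_zero a 1 one_pos
  have h := (((tendsto_mul_upperIncompleteGamma_sq_atTop ha).sub ((hΓ.pow 2).const_mul a)).sub
    ((hpow.const_mul 2).mul hΓ)).add (hΓ₂.const_mul (2 ^ (1 - 2 * a)))
  simp only [ne_eq, OfNat.ofNat_ne_zero, not_false_eq_true, zero_pow, mul_zero, sub_zero,
    add_zero] at h
  refine h.congr fun s => ?_
  simp only [upperIncompleteGammaSqPrimitive, Function.comp_apply, id]
  ring

theorem upperIncompleteGammaSqPrimitive_zero (ha : 0 < a) :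
    upperIncompleteGammaSqPrimitive a 0 =
      -(a * Gamma a ^ 2) + 2 ^ (1 - 2 * a) * Gamma (2 * a) := by
  simp only [upperIncompleteGammaSqPrimitive, mul_zero, zero_rpow ha.ne',
    upperIncompleteGamma_zero ha, upperIncompleteGamma_zero (by linarith : 0 < 2 * a)]
  ring

end

/-- For `α > 0`, `∫₀^∞ Γ(α,s)² ds = α Γ(α)² − Γ(2α+1)/(2^(2α) α)`. -/
theorem integral_upperIncompleteGamma_sq (α : ℝ) (hα : 0 < α) :
    ∫ s in Ioi (0 : ℝ), upperIncompleteGamma α s ^ 2 =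
      α * Real.Gamma α ^ 2 - Real.Gamma (2 * α + 1) / ((2 : ℝ) ^ (2 * α) * α) := by
  rw [integral_Ioi_of_hasDerivAt_of_tendsto
    ((continuousOn_upperIncompleteGammaSqPrimitive hα).continuousWithinAt self_mem_Ici)
    (fun s hs => hasDerivAt_upperIncompleteGammaSqPrimitive hα hs)
    (integrableOn_upperIncompleteGamma_sq hα) (tendsto_upperIncompleteGammaSqPrimitive_atTop hα),
    upperIncompleteGammaSqPrimitive_zero hα, Gamma_add_one (by positivity)]
  have hc : 2 * α * Gamma (2 * α) / (2 ^ (2 * α) * α) = 2 ^ (1 - 2 * α) * Gamma (2 * α) := by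
    rw [rpow_sub two_pos, rpow_one]
    field_simp
  rw [hc]
  ring
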